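/- arXiv:2207.05915 — 4 statements merged into one kernel-verified Lean document; each statement's English description precedes it below -/
import Mathlib

section
/- Let k₀ ∈ ℂ with Im k₀ > 0 and let r > 0 be a real number. Then the symmetric improper integral of x·e^{ixr}/(x² − k₀²) over the real line converges and equals iπ·e^{ik₀r}; that is, lim_{A→∞} ∫_{−A}^{A} x e^{ixr}/(x² − k₀²) dx = iπ e^{ik₀ r}. -/
/-!
Write `x / (x² - k₀²) = u x / 2` with `u = poleSum k₀`, i.e. `u x = (x - k₀)⁻¹ + (x + k₀)⁻¹`.
Integrating by parts against `e^{ixr} / (ir)` on `[-A, A]`, the boundary terms vanish as `A → ∞`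
because `u → 0`, and what remains tends to `(ir)⁻¹ ∫ H x e^{ixr} dx` with
`H = -u' = poleSqSum k₀`, which converges absolutely. That integral comes from Fourier inversion:
`-H (2πξ)` is the Fourier transform of the integrable kernel `|t| e^{ik₀|t|}`, and evaluating the
kernel at `t = r > 0` gives `∫ H x e^{ixr} dx = -2πr e^{ik₀r}`.
-/

open Complex MeasureTheory Filter
open Real Set Topology FourierTransform

lemma norm_ofReal_mul_cexp_mul (c : ℂ) (t : ℝ) :
    ‖(t : ℂ) * cexp (c * t)‖ = |t| * Real.exp (c.re * t) := by
  simp [norm_exp, mul_re]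

section Laplace

variable {c : ℂ}

lemma tendsto_cexp_mul_atTop (hc : c.re < 0) :
    Tendsto (fun t : ℝ => cexp (c * t)) atTop (𝓝 0) :=
  tendsto_exp_comap_re_atBot.comp <| tendsto_comap_iff.2 <| by
    simpa [Function.comp_def, mul_re] using tendsto_id.const_mul_atTop_of_neg hc

lemma tendsto_ofReal_mul_cexp_mul_atTop (hc : c.re < 0) :
    Tendsto (fun t : ℝ => (t : ℂ) * cexp (c * t)) atTop (𝓝 0) := by
  rw [tendsto_zero_iff_norm_tendsto_zero]
  refine (tendsto_rpow_mul_exp_neg_mul_atTop_nhds_zero 1 (-c.re) (by linarith)).congr' ?_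
  filter_upwards [eventually_ge_atTop 0] with t ht
  rw [norm_ofReal_mul_cexp_mul, abs_of_nonneg ht, rpow_one, neg_neg]

lemma integrableOn_ofReal_mul_cexp_mul_Ioi (hc : c.re < 0) :
    IntegrableOn (fun t : ℝ => (t : ℂ) * cexp (c * t)) (Ioi 0) := by
  refine (integrable_norm_iff (by fun_prop : Continuous _).aestronglyMeasurable).1 ?_
  refine (integrableOn_rpow_mul_exp_neg_mul_rpow (s := 1) (p := 1) (b := -c.re)
    (by norm_num) one_pos (by linarith)).congr_fun (fun t ht => ?_) measurableSet_Ioi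
  rw [norm_ofReal_mul_cexp_mul, abs_of_pos ht]
  simp only [rpow_one, neg_neg]

lemma integral_ofReal_mul_cexp_mul_Ioi (hc : c.re < 0) :
    ∫ t in Ioi (0 : ℝ), (t : ℂ) * cexp (c * t) = (c ^ 2)⁻¹ := by
  have hc0 : c ≠ 0 := by rintro rfl; simp at hc
  have hderiv : ∀ t ∈ Ici (0 : ℝ),
      HasDerivAt (fun t : ℝ => ((t : ℂ) / c - (c ^ 2)⁻¹) * cexp (c * t)) (t * cexp (c * t)) t := by
    intro t _
    have h₁ : HasDerivAt (fun z : ℂ => z / c - (c ^ 2)⁻¹) (1 / c) t := by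
      simpa using ((hasDerivAt_id (t : ℂ)).div_const c).sub_const (c ^ 2)⁻¹
    have h₂ : HasDerivAt (fun z : ℂ => cexp (c * z)) (cexp (c * t) * c) t := by
      simpa using ((hasDerivAt_id (t : ℂ)).const_mul c).cexp
    exact (h₁.mul h₂).comp_ofReal.congr_deriv (by field_simp; ring)
  have hlim : Tendsto (fun t : ℝ => ((t : ℂ) / c - (c ^ 2)⁻¹) * cexp (c * t)) atTop (𝓝 0) := by
    simpa [sub_mul, div_mul_eq_mul_div] using
      ((tendsto_ofReal_mul_cexp_mul_atTop hc).div_const c).sub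
        ((tendsto_cexp_mul_atTop hc).const_mul (c ^ 2)⁻¹)
  rw [integral_Ioi_of_hasDerivAt_of_tendsto' hderiv (integrableOn_ofReal_mul_cexp_mul_Ioi hc) hlim]
  simp

end Laplace

lemma integrable_comp_abs {E : Type*} [NormedAddCommGroup E] {f : ℝ → E}
    (hf : IntegrableOn f (Ioi 0)) : Integrable fun t => f |t| := by
  have hIoi : IntegrableOn (fun t => f |t|) (Ioi 0) :=
    hf.congr_fun (fun t ht => by rw [abs_of_pos ht]) measurableSet_Ioi
  have hIio : IntegrableOn (fun t => f |t|) (Iio 0) := by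
    have := IntegrableOn.comp_neg_Iio (c := (0 : ℝ)) (by simpa using hIoi)
    simpa only [abs_neg] using this
  rw [← integrableOn_univ, ← Iic_union_Ioi (a := 0)]
  exact (Iff.mpr integrableOn_Iic_iff_integrableOn_Iio hIio).union hIoi

lemma ofReal_sub_ne_zero {w : ℂ} (hw : w.im ≠ 0) (x : ℝ) : (x : ℂ) - w ≠ 0 :=
  fun h => hw (by simpa using congrArg im h)

lemma ofReal_add_ne_zero {w : ℂ} (hw : w.im ≠ 0) (x : ℝ) : (x : ℂ) + w ≠ 0 := by
  simpa using ofReal_sub_ne_zero (w := -w) (by simpa using hw) x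

noncomputable def poleSum (k : ℂ) (x : ℝ) : ℂ := ((x : ℂ) - k)⁻¹ + ((x : ℂ) + k)⁻¹

noncomputable def poleSqSum (k : ℂ) (x : ℝ) : ℂ := (((x : ℂ) - k) ^ 2)⁻¹ + (((x : ℂ) + k) ^ 2)⁻¹

lemma ofReal_div_sq_sub_sq {k : ℂ} (hk : k.im ≠ 0) (x : ℝ) :
    (x : ℂ) / (x ^ 2 - k ^ 2) = poleSum k x / 2 := by
  have := ofReal_sub_ne_zero hk x
  have := ofReal_add_ne_zero hk x
  rw [poleSum, show (x : ℂ) ^ 2 - k ^ 2 = (x - k) * (x + k) by ring]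
  field_simp
  ring

lemma hasDerivAt_poleSum {k : ℂ} (hk : k.im ≠ 0) (x : ℝ) :
    HasDerivAt (poleSum k) (-poleSqSum k x) x := by
  have h := (((hasDerivAt_id (x : ℂ)).sub_const k).inv (ofReal_sub_ne_zero hk x)).add
    (((hasDerivAt_id (x : ℂ)).add_const k).inv (ofReal_add_ne_zero hk x))
  exact h.comp_ofReal.congr_deriv (by simp only [poleSqSum, id]; ring)

lemma tendsto_inv_ofReal_sub_cocompact (w : ℂ) :
    Tendsto (fun x : ℝ => ((x : ℂ) - w)⁻¹) (cocompact ℝ) (𝓝 0) :=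
  tendsto_inv₀_cobounded.comp <| (tendsto_sub_const_cobounded w).comp <|
    Metric.cobounded_eq_cocompact (α := ℝ) ▸ RCLike.tendsto_ofReal_cobounded_cobounded ℂ

lemma tendsto_poleSum_cocompact (k : ℂ) : Tendsto (poleSum k) (cocompact ℝ) (𝓝 0) := by
  have h := (tendsto_inv_ofReal_sub_cocompact k).add (tendsto_inv_ofReal_sub_cocompact (-k))
  simp only [sub_neg_eq_add, add_zero] at h
  exact h

lemma integrable_inv_ofReal_sub_sq {w : ℂ} (hw : w.im ≠ 0) :
    Integrable fun x : ℝ => (((x : ℂ) - w) ^ 2)⁻¹ := by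
  have hbound : Integrable fun x : ℝ => (w.im ^ 2)⁻¹ * (1 + (w.im⁻¹ * (x - w.re)) ^ 2)⁻¹ :=
    ((integrable_inv_one_add_sq.comp_mul_left' (inv_ne_zero hw)).comp_sub_right w.re).const_mul _
  refine (integrable_norm_iff ?_).1 (hbound.congr (.of_forall fun x => ?_))
  · exact (Continuous.inv₀ (by fun_prop) fun x => pow_ne_zero 2 (ofReal_sub_ne_zero hw x))
      |>.aestronglyMeasurable
  · simp only [norm_inv, norm_pow, Complex.sq_norm, normSq_apply, sub_re, ofReal_re, sub_im,
      ofReal_im, zero_sub]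
    field_simp
    ring

lemma integrable_poleSqSum {k : ℂ} (hk : k.im ≠ 0) : Integrable (poleSqSum k) :=
  (integrable_inv_ofReal_sub_sq hk).add
    (by simpa using integrable_inv_ofReal_sub_sq (w := -k) (by simpa using hk))

lemma integrable_abs_mul_cexp_abs {k : ℂ} (hk : 0 < k.im) :
    Integrable fun t : ℝ => ((|t| : ℝ) : ℂ) * cexp (I * k * |t|) :=
  integrable_comp_abs (f := fun t : ℝ => (t : ℂ) * cexp (I * k * t))
    (integrableOn_ofReal_mul_cexp_mul_Ioi (by simpa using hk))

lemma fourier_abs_mul_cexp_abs {k : ℂ} (hk : 0 < k.im) (ξ : ℝ) :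
    𝓕 (fun t : ℝ => ((|t| : ℝ) : ℂ) * cexp (I * k * |t|)) ξ =
      -poleSqSum k (2 * π * ξ) := by
  set φ : ℝ → ℂ := fun t => ((|t| : ℝ) : ℂ) * cexp (I * k * |t|)
  have hre (s : ℝ) : (I * (k + s)).re < 0 := by simpa using hk
  set F : ℝ → ℂ := fun v => cexp (↑(-2 * π * v * ξ) * I) • φ v
  have hF : Integrable F :=
    (integrable_abs_mul_cexp_abs hk).bdd_smul 1 (by fun_prop)
      (.of_forall fun v => (norm_exp_ofReal_mul_I _).le)
  have hpos : ∫ v in Ioi 0, F v = ((I * (k + ↑(-(2 * π * ξ)))) ^ 2)⁻¹ := by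
    rw [← integral_ofReal_mul_cexp_mul_Ioi (hre _)]
    refine setIntegral_congr_fun measurableSet_Ioi fun v (hv : 0 < v) => ?_
    simp only [F, φ, smul_eq_mul, abs_of_pos hv]
    rw [mul_left_comm, ← Complex.exp_add]
    push_cast
    ring_nf
  have hneg : ∫ v in Iic 0, F v = ((I * (k + ↑(2 * π * ξ))) ^ 2)⁻¹ := by
    have hflip := integral_comp_neg_Ioi 0 F
    rw [neg_zero] at hflip
    rw [← integral_ofReal_mul_cexp_mul_Ioi (hre _), ← hflip]
    refine setIntegral_congr_fun measurableSet_Ioi fun v (hv : 0 < v) => ?_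
    simp only [F, φ, smul_eq_mul, abs_neg, abs_of_pos hv]
    rw [mul_left_comm, ← Complex.exp_add]
    push_cast
    ring_nf
  rw [Real.fourier_real_eq_integral_exp_smul, ← intervalIntegral.integral_Iic_add_Ioi
    hF.integrableOn hF.integrableOn, hneg, hpos]
  simp only [poleSqSum, mul_pow, I_sq, neg_one_mul, inv_neg]
  push_cast
  ring

lemma integral_poleSqSum_mul_cexp {k : ℂ} (hk : 0 < k.im) {r : ℝ} (hr : 0 < r) :
    ∫ x : ℝ, poleSqSum k x * cexp (I * x * r) = -(2 * π * r) * cexp (I * k * r) := by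
  set φ : ℝ → ℂ := fun t => ((|t| : ℝ) : ℂ) * cexp (I * k * |t|)
  have hFφ : 𝓕 φ = fun ξ => -poleSqSum k (2 * π * ξ) := funext (fourier_abs_mul_cexp_abs hk)
  have hinv := (integrable_abs_mul_cexp_abs hk).fourierInv_fourier_eq
    (hFφ ▸ ((integrable_poleSqSum hk.ne').comp_mul_left' (by positivity)).neg)
    (by fun_prop : Continuous φ).continuousAt (v := r)
  rw [hFφ, Real.fourierInv_eq'] at hinv
  -- substitute `x = 2πv` in the inversion integral
  have hG : (fun v : ℝ => cexp (↑(2 * π * inner ℝ v r) * I) • -poleSqSum k (2 * π * v)) =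
      fun v => -(poleSqSum k (2 * π * v) * cexp (I * ↑(2 * π * v) * r)) := by
    ext v
    simp only [RCLike.inner_apply, conj_trivial, smul_eq_mul]
    push_cast
    ring_nf
  rw [hG, Measure.integral_comp_mul_left (fun x : ℝ => -(poleSqSum k x * cexp (I * x * r))),
    integral_neg, abs_of_pos (by positivity), Complex.real_smul] at hinv
  simp only [abs_of_pos hr] at hinv
  have hπ : (π : ℂ) ≠ 0 := ofReal_ne_zero.2 pi_ne_zero
  push_cast at hinv
  field_simp at hinv
  rw [mul_right_comm I (r : ℂ) k] at hinv
  linear_combination -hinv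

lemma tendsto_integral_mul_deriv_of_tendsto_cocompact {A : Type*} [NormedRing A]
    [NormedAlgebra ℝ A] [CompleteSpace A] {u v u' v' : ℝ → A}
    (hu : ∀ x, HasDerivAt u (u' x) x) (hv : ∀ x, HasDerivAt v (v' x) x)
    (hu' : LocallyIntegrable u') (hv' : LocallyIntegrable v')
    (huv : Tendsto (fun x => u x * v x) (cocompact ℝ) (𝓝 0))
    (hu'v : Integrable fun x => u' x * v x) :
    Tendsto (fun A : ℝ => ∫ x in -A..A, u x * v' x) atTop (𝓝 (-∫ x, u' x * v x)) := by
  have hparts (A : ℝ) : ∫ x in -A..A, u x * v' x =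
      u A * v A - u (-A) * v (-A) - ∫ x in -A..A, u' x * v x :=
    intervalIntegral.integral_mul_deriv_eq_deriv_mul (fun x _ => hu x) (fun x _ => hv x)
      ((hu'.integrableOn_isCompact isCompact_uIcc).intervalIntegrable)
      ((hv'.integrableOn_isCompact isCompact_uIcc).intervalIntegrable)
  have hright := huv.mono_left atTop_le_cocompact
  have hleft := (huv.mono_left atBot_le_cocompact).comp tendsto_neg_atTop_atBot
  simpa [hparts] using (hright.sub hleft).sub
    (intervalIntegral_tendsto_integral hu'v tendsto_neg_atTop_atBot tendsto_id)

lemma tendsto_integral_mul_cexp_of_tendsto_cocompact {u u' : ℝ → ℂ} {r : ℝ} (hr : r ≠ 0)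
    (hu : ∀ x, HasDerivAt u (u' x) x) (hu0 : Tendsto u (cocompact ℝ) (𝓝 0))
    (hu' : Integrable u') :
    Tendsto (fun A : ℝ => ∫ x in -A..A, u x * cexp (I * x * r)) atTop
      (𝓝 (-(∫ x, u' x * cexp (I * x * r)) / (I * r))) := by
  have hr' : (r : ℂ) ≠ 0 := ofReal_ne_zero.2 hr
  set v : ℝ → ℂ := fun x => cexp (I * x * r) / (I * r)
  have hv (x : ℝ) : HasDerivAt v (cexp (I * x * r)) x := by
    have h := (((hasDerivAt_id (x : ℂ)).const_mul I).mul_const (r : ℂ)).cexp.div_const (I * r)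
    exact h.comp_ofReal.congr_deriv (by simp only [id]; field_simp)
  have hv_norm (x : ℝ) : ‖v x‖ ≤ |r|⁻¹ := by
    simp [v, norm_exp]
  have h := tendsto_integral_mul_deriv_of_tendsto_cocompact hu hv hu'.locallyIntegrable
    (by fun_prop : Continuous fun x : ℝ => cexp (I * x * r)).locallyIntegrable
    (hu0.zero_mul_isBoundedUnder_le (isBoundedUnder_of ⟨_, hv_norm⟩))
    (hu'.mul_bdd (by fun_prop) (.of_forall hv_norm))
  simpa [v, mul_div_assoc', integral_div, neg_div] using h

/-- For a complex wavenumber `k₀` with positive imaginary part (lossy medium) and `r > 0`,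
the symmetric improper integral `lim_{A→∞} ∫_{-A}^{A} x e^{ixr}/(x² - k₀²) dx` converges
to `iπ e^{ik₀ r}`. -/
theorem stmt0 (k₀ : ℂ) (hk : 0 < k₀.im) (r : ℝ) (hr : 0 < r) :
    Tendsto (fun A : ℝ =>
        ∫ x in (-A)..A, (x : ℂ) * Complex.exp (Complex.I * x * r) / (x ^ 2 - k₀ ^ 2))
      atTop (nhds (Complex.I * Real.pi * Complex.exp (Complex.I * k₀ * r))) := by
  have h := tendsto_integral_mul_cexp_of_tendsto_cocompact hr.ne' (hasDerivAt_poleSum hk.ne')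
    (tendsto_poleSum_cocompact k₀) (integrable_poleSqSum hk.ne').neg
  convert h.div_const 2 using 2 with A
  · rw [← intervalIntegral.integral_div]
    refine intervalIntegral.integral_congr fun x _ => ?_
    rw [mul_div_right_comm, ofReal_div_sq_sub_sq hk.ne']
    ring
  · have hr' : (r : ℂ) ≠ 0 := ofReal_ne_zero.2 hr.ne'
    simp only [neg_mul, integral_neg, neg_neg, integral_poleSqSum_mul_cexp hk hr]
    field_simp
    rw [I_sq]
end

section
/- Let α ∈ [0, π/2) and θ' ∈ (−π/2 + α, π/2 − α). Then cos α − sin θ' > 0 and cos(α − θ') > 0, and θ'' := log( (cos α − sin θ') / cos(α − θ') ) satisfies the constant-phase equation cos θ' · cosh θ'' + tan α · sin θ' · sinh θ'' = 1. -/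
open Real

/-! With `x = (cos α - sin θ') / cos (α - θ')` we have `cosh (log x) = (x + x⁻¹) / 2` and
`sinh (log x) = (x - x⁻¹) / 2`, so after multiplying by `2 cos α` the constant-phase equation reads
`x cos (α - θ') + x⁻¹ cos (α + θ') = 2 cos α`. The first term is `cos α - sin θ'`, and the second
is `cos α + sin θ'` because `cos (α - θ') cos (α + θ') = cos² α - sin² θ'`. -/

lemma cos_sub_mul_cos_add (α θ : ℝ) : cos (α - θ) * cos (α + θ) = cos α ^ 2 - sin θ ^ 2 := by
  rw [cos_sub, cos_add]
  linear_combination cos α ^ 2 * sin_sq_add_cos_sq θ - sin θ ^ 2 * sin_sq_add_cos_sq α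

lemma sin_lt_cos_of_lt_pi_div_two_sub {α θ : ℝ} (hα : 0 ≤ α) (hθ : -(π / 2) ≤ θ)
    (hθα : θ < π / 2 - α) : sin θ < cos α := by
  rw [← sin_pi_div_two_sub]
  exact strictMonoOn_sin ⟨hθ, by linarith⟩ ⟨by linarith, by linarith⟩ hθα

lemma mul_cosh_log_add_mul_sinh_log (a b : ℝ) {x : ℝ} (hx : 0 < x) :
    a * cosh (log x) + b * sinh (log x) = ((a + b) * x + (a - b) * x⁻¹) / 2 := by
  rw [cosh_log hx, sinh_log hx]
  ring

lemma cos_mul_cosh_log_add_tan_mul_sin_mul_sinh_log {α θ : ℝ} (hα : cos α ≠ 0)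
    (hN : 0 < cos α - sin θ) (hD : 0 < cos (α - θ)) :
    cos θ * cosh (log ((cos α - sin θ) / cos (α - θ))) +
      tan α * sin θ * sinh (log ((cos α - sin θ) / cos (α - θ))) = 1 := by
  have hsum : cos θ + tan α * sin θ = cos (α - θ) / cos α := by
    rw [tan_eq_sin_div_cos, cos_sub]
    field_simp
  have hdiff : cos θ - tan α * sin θ = cos (α + θ) / cos α := by
    rw [tan_eq_sin_div_cos, cos_add]
    field_simp
  rw [mul_cosh_log_add_mul_sinh_log _ _ (div_pos hN hD), hsum, hdiff, inv_div]
  field_simp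
  linear_combination cos_sub_mul_cos_add α θ

/-- Closed-form solution of the steepest-descent (constant-phase) contour equation: for a loss
angle `α ∈ [0, π/2)` and `θ' ∈ (-π/2 + α, π/2 - α)`, both `cos α - sin θ'` and `cos(α - θ')`
are positive, and `θ'' = log((cos α - sin θ')/cos(α - θ'))` satisfies
`cos θ' cosh θ'' + tan α · sin θ' sinh θ'' = 1`. -/
theorem stmt10 (α : ℝ) (hα : α ∈ Set.Ico 0 (Real.pi / 2)) (θ' : ℝ)
    (hθ' : θ' ∈ Set.Ioo (-(Real.pi / 2) + α) (Real.pi / 2 - α)) :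
    0 < Real.cos α - Real.sin θ' ∧ 0 < Real.cos (α - θ') ∧
      Real.cos θ' * Real.cosh (Real.log ((Real.cos α - Real.sin θ') / Real.cos (α - θ'))) +
          Real.tan α * Real.sin θ' *
            Real.sinh (Real.log ((Real.cos α - Real.sin θ') / Real.cos (α - θ'))) = 1 := by
  obtain ⟨hα0, hαπ⟩ := hα
  obtain ⟨hθlo, hθhi⟩ := hθ'
  have hN : 0 < cos α - sin θ' :=
    sub_pos.2 (sin_lt_cos_of_lt_pi_div_two_sub hα0 (by linarith) hθhi)
  have hD : 0 < cos (α - θ') := cos_pos_of_mem_Ioo ⟨by linarith, by linarith⟩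
  have hcos : 0 < cos α := cos_pos_of_mem_Ioo ⟨by linarith [pi_pos], hαπ⟩
  exact ⟨hN, hD, cos_mul_cosh_log_add_tan_mul_sin_mul_sinh_log hcos.ne' hN hD⟩
end

section
/- Let α ∈ [0, π/2) and θ' ∈ (−π/2 + α, π/2 − α), and set θ'' = log( (cos α − sin θ') / cos(α − θ') ). Then e^{−θ''} sin(α + θ') + e^{θ''} sin(α − θ') ≥ 2 sin α, with equality when θ' = 0; equivalently, for any a > 0 and r > 0, Re( i · a e^{iα} · r · cos(θ' + iθ'') ) ≤ Re( i · a e^{iα} · r ), i.e. along the steepest-descent contour the real part of the exponent is maximized at the saddle point. -/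
open Complex

/-- Along the steepest-descent contour `θ'' = log((cos α - sin θ')/cos(α - θ'))`, the real
part of the exponent is maximized at the saddle point: for `α ∈ [0, π/2)` and
`θ' ∈ (-π/2 + α, π/2 - α)`, one has
`e^{-θ''} sin(α + θ') + e^{θ''} sin(α - θ') ≥ 2 sin α`, with equality at `θ' = 0`;
equivalently, for all `a > 0`, `r > 0`,
`Re(i a e^{iα} r cos(θ' + iθ'')) ≤ Re(i a e^{iα} r)`. -/
theorem stmt12 (α : ℝ) (hα : α ∈ Set.Ico 0 (Real.pi / 2)) (θ' : ℝ)
    (hθ' : θ' ∈ Set.Ioo (-(Real.pi / 2) + α) (Real.pi / 2 - α)) :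
    2 * Real.sin α ≤
        Real.exp (-(Real.log ((Real.cos α - Real.sin θ') / Real.cos (α - θ')))) *
            Real.sin (α + θ') +
          Real.exp (Real.log ((Real.cos α - Real.sin θ') / Real.cos (α - θ'))) *
            Real.sin (α - θ') ∧
      (θ' = 0 →
        Real.exp (-(Real.log ((Real.cos α - Real.sin θ') / Real.cos (α - θ')))) *
            Real.sin (α + θ') +
          Real.exp (Real.log ((Real.cos α - Real.sin θ') / Real.cos (α - θ'))) *
            Real.sin (α - θ') = 2 * Real.sin α) ∧
      ∀ a r : ℝ, 0 < a → 0 < r →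
        (Complex.I * (a * Complex.exp (Complex.I * α)) * r *
            Complex.cos ((θ' : ℂ) +
              Complex.I * (Real.log ((Real.cos α - Real.sin θ') / Real.cos (α - θ'))))).re ≤
          (Complex.I * (a * Complex.exp (Complex.I * α)) * r).re := by
  obtain ⟨hα0, hα2⟩ := hα
  obtain ⟨ht1, ht2⟩ := hθ'
  have hπ := Real.pi_pos
  set c : ℝ := Real.cos α - Real.sin θ' with hc_def
  set d : ℝ := Real.cos (α - θ') with hd_def
  have hd : 0 < d := by
    apply Real.cos_pos_of_mem_Ioo
    constructor <;> [linarith; linarith]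
  have hθmem : θ' ∈ Set.Icc (-(Real.pi / 2)) (Real.pi / 2) := by
    constructor <;> linarith
  have hc : 0 < c := by
    have h1 : Real.sin θ' < Real.sin (Real.pi / 2 - α) := by
      apply Real.strictMonoOn_sin hθmem ⟨by linarith, by linarith⟩ ht2
    rw [Real.sin_pi_div_two_sub] at h1
    simpa [hc_def] using sub_pos.mpr h1
  have hcd : 0 < c / d := div_pos hc hd
  have hexp : Real.exp (Real.log (c / d)) = c / d := Real.exp_log hcd
  have hexpn : Real.exp (-(Real.log (c / d))) = d / c := by
    rw [Real.exp_neg, hexp, inv_div]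
  -- the key identity
  have p1 := Real.sin_sq_add_cos_sq α
  have p2 := Real.sin_sq_add_cos_sq θ'
  have key : d ^ 2 * Real.sin (α + θ') + c ^ 2 * Real.sin (α - θ') - 2 * Real.sin α * (c * d)
      = 2 * Real.sin θ' ^ 2 * (1 + Real.sin (α - θ')) := by
    rw [hc_def, hd_def, Real.sin_add, Real.sin_sub, Real.cos_sub]
    set sa := Real.sin α; set ca := Real.cos α; set st := Real.sin θ'; set ct := Real.cos θ'
    linear_combination (2 * st ^ 2 - ca * st ^ 3 + sa * st ^ 2 * ct) * p1 +
      (ca ^ 3 * st + sa * ca ^ 2 * ct + 2 * sa ^ 2 * ca * st) * p2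
  have hsin : -1 ≤ Real.sin (α - θ') := Real.neg_one_le_sin _
  have hmain : 2 * Real.sin α ≤ d / c * Real.sin (α + θ') + c / d * Real.sin (α - θ') := by
    rw [div_mul_eq_mul_div, div_mul_eq_mul_div, div_add_div _ _ hc.ne' hd.ne',
      le_div_iff₀ (mul_pos hc hd)]
    nlinarith [sq_nonneg (Real.sin θ'), key]
  refine ⟨by rw [hexp, hexpn]; exact hmain, ?_, ?_⟩
  · intro h
    subst h
    have hcd1 : c = d := by simp [hc_def, hd_def]
    rw [hexp, hexpn, hcd1, div_self hd.ne']
    simp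
    ring
  · intro a r ha hr
    set y : ℝ := Real.log (c / d) with hy_def
    have hre : (Complex.I * (a * Complex.exp (Complex.I * α)) * r *
        Complex.cos ((θ' : ℂ) + Complex.I * (y : ℂ))).re
        = a * r * (-(Real.sin α) * Real.cos θ' * Real.cosh y
            + Real.cos α * Real.sin θ' * Real.sinh y) := by
      have e1 : Complex.I * (α : ℂ) = (α : ℂ) * Complex.I := mul_comm _ _
      have e2 : Complex.I * (y : ℂ) = (y : ℂ) * Complex.I := mul_comm _ _
      rw [e1, e2, Complex.exp_mul_I, Complex.cos_add, Complex.cos_mul_I, Complex.sin_mul_I]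
      simp [Complex.ext_iff, Complex.cos_ofReal_re, Complex.sin_ofReal_re, Complex.sinh_ofReal_re, Complex.cosh_ofReal_re]
      ring
    have hre2 : (Complex.I * (a * Complex.exp (Complex.I * α)) * r).re
        = a * r * (-(Real.sin α)) := by
      have e1 : Complex.I * (α : ℂ) = (α : ℂ) * Complex.I := mul_comm _ _
      rw [e1, Complex.exp_mul_I]
      simp [Complex.ext_iff, Complex.sin_ofReal_re, Complex.cos_ofReal_re]
      ring
    rw [hre, hre2]
    have hE : Real.sin α * Real.cos θ' * Real.cosh y - Real.cos α * Real.sin θ' * Real.sinh y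
        = (Real.exp (-y) * Real.sin (α + θ') + Real.exp y * Real.sin (α - θ')) / 2 := by
      rw [Real.cosh_eq, Real.sinh_eq, Real.sin_add, Real.sin_sub]
      ring
    have h2 : Real.sin α ≤ Real.sin α * Real.cos θ' * Real.cosh y
        - Real.cos α * Real.sin θ' * Real.sinh y := by
      rw [hE]
      have : 2 * Real.sin α ≤ Real.exp (-y) * Real.sin (α + θ') + Real.exp y * Real.sin (α - θ') := by
        rw [hexpn, hexp]; exact hmain
      linarith
    have har : 0 < a * r := mul_pos ha hr
    nlinarith
end

section
/- Let a > 0, r > 0, α ∈ [0, π/2), and for θ' ∈ (−π/2 + α, π/2 − α) set θ''(θ') = log( (cos α − sin θ')/cos(α − θ') ). Then e^{−θ''(θ')} sin(α + θ') + e^{θ''(θ')} sin(α − θ') → +∞ as θ' → (π/2 − α)⁻; equivalently, Re( i · a e^{iα} · r · cos(θ' + iθ''(θ')) ) → −∞, so the modulus of the rapidly-varying factor of the steepest-descent integrand tends to 0 at the endpoint of the contour. -/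
open Complex Filter Topology

/-!
Writing `β = (α - θ)/2 + π/4`, both `cos α - sin θ` and `cos (α - θ)` carry the factor
`2 sin β`, and after cancelling it `e^{θ''} = sin (π/4 - (α + θ)/2) / cos β`. This is positive
on the whole contour and tends to `0` at its endpoint `θ = π/2 - α`, where `β = α` and
`cos α > 0`. Hence `e^{-θ''} sin (α + θ) ≈ e^{-θ''} → +∞` while `e^{θ''} sin (α - θ) → 0`.
The real part of the exponent is `-(a r / 2)` times that sum.
-/

namespace Real

lemma cos_sub_sin_eq_mul_sin (α θ : ℝ) :
    cos α - sin θ = 2 * sin ((α - θ) / 2 + π / 4) * sin (π / 4 - (α + θ) / 2) := by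
  rw [← cos_pi_div_two_sub θ, cos_sub_cos]
  have hneg : (α - (π / 2 - θ)) / 2 = -(π / 4 - (α + θ) / 2) := by ring
  rw [hneg, sin_neg, show (α + (π / 2 - θ)) / 2 = (α - θ) / 2 + π / 4 by ring]
  ring

lemma cos_sub_eq_mul_sin_cos (α θ : ℝ) :
    cos (α - θ) = 2 * sin ((α - θ) / 2 + π / 4) * cos ((α - θ) / 2 + π / 4) := by
  rw [← sin_two_mul, ← cos_sub_pi_div_two]
  ring_nf

lemma cos_sub_sin_div_cos_sub_eq {α θ : ℝ} (h : sin ((α - θ) / 2 + π / 4) ≠ 0) :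
    (cos α - sin θ) / cos (α - θ) =
      sin (π / 4 - (α + θ) / 2) / cos ((α - θ) / 2 + π / 4) := by
  rw [cos_sub_sin_eq_mul_sin, cos_sub_eq_mul_sin_cos,
    mul_div_mul_left _ _ (mul_ne_zero two_ne_zero h)]

lemma cos_sub_sin_div_cos_sub_pos {α θ : ℝ} (hα : 0 ≤ α)
    (hθ : θ ∈ Set.Ioo (α - π / 2) (π / 2 - α)) :
    0 < (cos α - sin θ) / cos (α - θ) := by
  obtain ⟨hθl, hθr⟩ := hθ
  have hπ := pi_pos
  have hβ : 0 < sin ((α - θ) / 2 + π / 4) := sin_pos_of_pos_of_lt_pi (by linarith) (by linarith)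
  rw [cos_sub_sin_div_cos_sub_eq hβ.ne']
  exact div_pos (sin_pos_of_pos_of_lt_pi (by linarith) (by linarith))
    (cos_pos_of_mem_Ioo ⟨by linarith, by linarith⟩)

lemma tendsto_cos_sub_sin_div_cos_sub {α : ℝ} (hα : α ∈ Set.Ico 0 (π / 2)) :
    Tendsto (fun θ => (cos α - sin θ) / cos (α - θ)) (𝓝[<] (π / 2 - α)) (𝓝[>] 0) := by
  obtain ⟨hα0, hα2⟩ := hα
  have hcontour : Set.Ioo (α - π / 2) (π / 2 - α) ∈ 𝓝[<] (π / 2 - α) :=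
    Ioo_mem_nhdsLT (by linarith)
  have hcosα : cos α ≠ 0 := (cos_pos_of_mem_Ioo ⟨by linarith [pi_pos], hα2⟩).ne'
  have hlim : Tendsto (fun θ => sin (π / 4 - (α + θ) / 2) / cos ((α - θ) / 2 + π / 4))
      (𝓝[<] (π / 2 - α)) (𝓝 0) := by
    have hcont : ContinuousAt (fun θ => sin (π / 4 - (α + θ) / 2) / cos ((α - θ) / 2 + π / 4))
        (π / 2 - α) := by
      refine ContinuousAt.div (by fun_prop) (by fun_prop) ?_
      rwa [show (α - (π / 2 - α)) / 2 + π / 4 = α by ring]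
    have hval : sin (π / 4 - (α + (π / 2 - α)) / 2) = 0 := by
      rw [show π / 4 - (α + (π / 2 - α)) / 2 = 0 by ring, sin_zero]
    simpa only [hval, zero_div] using hcont.tendsto.mono_left nhdsWithin_le_nhds
  refine tendsto_nhdsWithin_iff.2 ⟨hlim.congr' ?_, ?_⟩ <;>
    filter_upwards [hcontour] with θ hθ
  · have hπ := pi_pos
    exact (cos_sub_sin_div_cos_sub_eq
      (sin_pos_of_pos_of_lt_pi (by linarith [hθ.2]) (by linarith [hθ.1])).ne').symm
  · exact cos_sub_sin_div_cos_sub_pos hα0 hθ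

end Real

lemma Filter.Tendsto.exp_neg_log_mul_add_exp_log_mul_atTop {ι : Type*} {l : Filter ι}
    {x f g : ι → ℝ} {p q : ℝ} (hx : Tendsto x l (𝓝[>] 0)) (hp : 0 < p)
    (hf : Tendsto f l (𝓝 p)) (hg : Tendsto g l (𝓝 q)) :
    Tendsto (fun i => Real.exp (-Real.log (x i)) * f i + Real.exp (Real.log (x i)) * g i)
      l atTop := by
  have hxpos : ∀ᶠ i in l, 0 < x i := hx (self_mem_nhdsWithin)
  have hsum : Tendsto (fun i => f i * (x i)⁻¹ + x i * g i) l atTop :=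
    (hf.pos_mul_atTop hp (tendsto_inv_nhdsGT_zero.comp hx)).atTop_add
      ((tendsto_nhds_of_tendsto_nhdsWithin hx).mul hg)
  refine hsum.congr' ?_
  filter_upwards [hxpos] with i hi
  rw [Real.exp_neg, Real.exp_log hi, mul_comm (x i)⁻¹]

lemma Complex.re_I_mul_exp_mul_cos_add_I_mul (a r α θ t : ℝ) :
    (I * (a * exp (I * α)) * r * cos ((θ : ℂ) + I * t)).re =
      -(a * r / 2) * (Real.exp (-t) * Real.sin (α + θ) + Real.exp t * Real.sin (α - θ)) := by
  simp only [cos, neg_add_rev, mul_re, I_re, ofReal_re, exp_re, zero_mul, I_im, ofReal_im,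
    mul_zero, sub_self, Real.exp_zero, mul_im, one_mul, zero_add, exp_im, sub_zero, add_zero,
    zero_sub, neg_mul, div_ofNat_re, add_re, add_im, mul_one, Real.exp_neg, neg_re, neg_zero,
    neg_im, sub_neg_eq_add, Real.cos_neg, div_ofNat_im, Real.sin_neg, mul_neg, Real.sin_add,
    Real.sin_sub]
  ring

/-- Exponential decay of the steepest-descent integrand at the endpoint of the contour: for
`k₀ = a e^{iα}` with `a > 0`, `r > 0`, loss angle `α ∈ [0, π/2)`, and
`θ''(θ') = log((cos α - sin θ')/cos(α - θ'))`, the quantity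
`e^{-θ''} sin(α + θ') + e^{θ''} sin(α - θ')` tends to `+∞` as `θ' → (π/2 - α)⁻`;
equivalently, `Re(i a e^{iα} r cos(θ' + iθ''(θ'))) → -∞`, so the modulus of the
rapidly-varying factor tends to `0` at the endpoint. -/
theorem stmt14 (a : ℝ) (ha : 0 < a) (r : ℝ) (hr : 0 < r) (α : ℝ)
    (hα : α ∈ Set.Ico 0 (Real.pi / 2)) :
    Tendsto (fun θ' : ℝ =>
        Real.exp (-(Real.log ((Real.cos α - Real.sin θ') / Real.cos (α - θ')))) *
            Real.sin (α + θ') +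
          Real.exp (Real.log ((Real.cos α - Real.sin θ') / Real.cos (α - θ'))) *
            Real.sin (α - θ'))
        (nhdsWithin (Real.pi / 2 - α) (Set.Iio (Real.pi / 2 - α))) atTop ∧
      Tendsto (fun θ' : ℝ =>
          (Complex.I * (a * Complex.exp (Complex.I * α)) * r *
            Complex.cos ((θ' : ℂ) +
              Complex.I *
                (Real.log ((Real.cos α - Real.sin θ') / Real.cos (α - θ'))))).re)
        (nhdsWithin (Real.pi / 2 - α) (Set.Iio (Real.pi / 2 - α))) atBot := by
  have hsin_add : Tendsto (fun θ' => Real.sin (α + θ')) (𝓝[<] (Real.pi / 2 - α)) (𝓝 1) := by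
    have h := (Real.continuous_sin.comp (continuous_const_add α)).tendsto (Real.pi / 2 - α)
    rw [Function.comp_apply, add_sub_cancel, Real.sin_pi_div_two] at h
    exact h.mono_left nhdsWithin_le_nhds
  have hsin_sub : Tendsto (fun θ' => Real.sin (α - θ')) (𝓝[<] (Real.pi / 2 - α))
      (𝓝 (Real.sin (α - (Real.pi / 2 - α)))) :=
    ((Real.continuous_sin.comp (continuous_sub_left α)).tendsto _).mono_left nhdsWithin_le_nhds
  have hsum := (Real.tendsto_cos_sub_sin_div_cos_sub hα).exp_neg_log_mul_add_exp_log_mul_atTop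
    one_pos hsin_add hsin_sub
  refine ⟨hsum, ?_⟩
  simp only [Complex.re_I_mul_exp_mul_cos_add_I_mul, neg_mul]
  exact tendsto_neg_atTop_atBot.comp (hsum.const_mul_atTop (by positivity))
end
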